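/- With γ > 0, κ > 0 and ᾱ = γθ/(θ+κ²), β̄ = γκ²/(θ+κ²), the optimal parameters coincide: λ_{ᾱ} = λ̄(β̄,κ) = λ̄(γ,κ), where λ_α = -α√((θ-8r)/(θa²+4aα²)), λ̄(β,κ) (short-climb optimizer) = -β√(θ(θ-8r)/(a²κ⁴+4aθβ²)), and λ̄(γ,κ) = -γ√(θ(θ-8r)/(a²(κ²+θ)²+4aγ²θ)). -/
import Mathlib


noncomputable def lamGamma (θ r a α : ℝ) : ℝ :=
  -α * Real.sqrt ((θ - 8*r)/(θ*a^2 + 4*a*α^2))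
noncomputable def lamBarShort (θ r a β κ : ℝ) : ℝ :=
  -β * Real.sqrt (θ*(θ - 8*r)/(a^2*κ^4 + 4*a*θ*β^2))
noncomputable def lamBar (θ r a γ κ : ℝ) : ℝ :=
  -γ * Real.sqrt (θ*(θ - 8*r)/(a^2*(κ^2 + θ)^2 + 4*a*γ^2*θ))

lemma neg_mul_sqrt (c x : ℝ) (hc : 0 ≤ c) :
    -c * Real.sqrt x = -Real.sqrt (c^2 * x) := by
  rw [Real.sqrt_mul (sq_nonneg c), Real.sqrt_sq hc]
  ring

theorem stmt7 (θ r a : ℝ) (hr : 0 ≤ r) (hθ : 8*r < θ) (ha : 0 < a)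
    (γ κ : ℝ) (hγ : 0 < γ) (hκ : 0 < κ) :
    lamGamma θ r a (γ*θ/(θ + κ^2)) = lamBarShort θ r a (γ*κ^2/(θ + κ^2)) κ ∧
    lamBarShort θ r a (γ*κ^2/(θ + κ^2)) κ = lamBar θ r a γ κ := by
  have hθ0 : 0 < θ := lt_of_le_of_lt (by linarith) hθ
  have hs : 0 < θ + κ^2 := by positivity
  have hα : 0 ≤ γ*θ/(θ + κ^2) := by positivity
  have hβ : 0 ≤ γ*κ^2/(θ + κ^2) := by positivity
  have hd1 : (θ*a^2 + 4*a*(γ*θ/(θ + κ^2))^2) ≠ 0 := by positivity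
  have hd2 : (a^2*κ^4 + 4*a*θ*(γ*κ^2/(θ + κ^2))^2) ≠ 0 := by positivity
  have hd3 : (a^2*(κ^2 + θ)^2 + 4*a*γ^2*θ) ≠ 0 := by positivity
  have hs' : (θ + κ^2) ≠ 0 := ne_of_gt hs
  unfold lamGamma lamBarShort lamBar
  rw [neg_mul_sqrt _ _ hα, neg_mul_sqrt _ _ hβ, neg_mul_sqrt _ _ hγ.le]
  constructor <;> congr 2 <;> field_simp <;> ring
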